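/- For k ≥ 8 and n = k³ (more generally k = ⌊n^{2/3}⌋), the cyclically invariant function f defined by cyclic occurrence of the pattern g satisfies s(f) = Θ(n^{1/3}). -/

import Mathlib

/-- Flip the `i`-th bit of `x`. -/
def flipBit {n : ℕ} (x : Fin n → Bool) (i : Fin n) : Fin n → Bool :=
  fun j => if j = i then !x j else x j

/-- Flip all bits of `x` in the block `B`. -/
def flipSet {n : ℕ} (x : Fin n → Bool) (B : Finset (Fin n)) : Fin n → Bool :=
  fun j => if j ∈ B then !x j else x j

/-- Sensitivity of `f` at the input `x`. -/
def sensAt {n : ℕ} (f : (Fin n → Bool) → Bool) (x : Fin n → Bool) : ℕ :=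
  (Finset.univ.filter fun i => f (flipBit x i) ≠ f x).card

/-- Sensitivity of `f`. -/
def sens {n : ℕ} (f : (Fin n → Bool) → Bool) : ℕ :=
  Finset.univ.sup fun x => sensAt f x

/-- 0-sensitivity of `f`: max sensitivity over inputs where `f` is 0. -/
def sens0 {n : ℕ} (f : (Fin n → Bool) → Bool) : ℕ :=
  (Finset.univ.filter fun x => f x = false).sup fun x => sensAt f x

/-- 1-sensitivity of `f`: max sensitivity over inputs where `f` is 1. -/
def sens1 {n : ℕ} (f : (Fin n → Bool) → Bool) : ℕ :=
  (Finset.univ.filter fun x => f x = true).sup fun x => sensAt f x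

/-- Block sensitivity of `f` at `x`: the largest number of pairwise disjoint
nonempty blocks each of whose flips changes the value of `f` at `x`. -/
noncomputable def bsensAt {n : ℕ} (f : (Fin n → Bool) → Bool) (x : Fin n → Bool) : ℕ :=
  sSup {r : ℕ | ∃ B : Fin r → Finset (Fin n),
    (∀ j, (B j).Nonempty ∧ f (flipSet x (B j)) ≠ f x) ∧
    ∀ j j', j ≠ j' → Disjoint (B j) (B j')}

/-- Block sensitivity of `f`. -/
noncomputable def bsens {n : ℕ} (f : (Fin n → Bool) → Bool) : ℕ :=
  Finset.univ.sup fun x => bsensAt f x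

/-- The pattern predicate defining `g : {0,1}^{k²} → {0,1}`, reading a word as
`k` blocks of length `k`: block 1 equals `110^{k-2}`, the first five bits of
blocks `2..k` are 1, and the last three bits of block `k` are 1. -/
def GPat (k : ℕ) (z : ℕ → Bool) : Prop :=
  (∀ t < k, z t = decide (t < 2)) ∧
  (∀ j, 1 ≤ j → j < k → ∀ t < 5, z (j * k + t) = true) ∧
  (∀ t, k - 3 ≤ t → t < k → z ((k - 1) * k + t) = true)

open Classical in
/-- The cyclically invariant function `f : {0,1}^n → {0,1}` with
`f(x) = 1` iff `x`, viewed cyclically, contains a contiguous length-`k²`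
substring on which `g` evaluates to 1. -/
noncomputable def cycPatFn (k n : ℕ) (hn : 0 < n) : (Fin n → Bool) → Bool :=
  fun x => decide (∃ ℓ : ℕ, GPat k (fun t => x ⟨(ℓ + t) % n, Nat.mod_lt _ hn⟩))

/-!
View `g` as a partial word on the offsets `[0, k²)`, prescribed exactly on the first block, the
first five offsets of every block and the last three offsets; so `f x = 1` iff some cyclic shift of
`x` agrees with this partial word.

Upper bound. On a 1-input every sensitive bit lies in the support of one fixed occurrence, which
has at most `6k + 3` offsets. On a 0-input every sensitive bit creates an occurrence, and distinct
bits create occurrences at distinct starts. Two such starts cannot lie at a distance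
`δ ∈ [2, k² - 5]`: the pattern and its shift by `δ` disagree at three offsets, while the two
one-bit modifications of `x` can only account for two. So there are at most two starts in every
window of length `k² - 4`, hence `O(n / k²) = O(k)` of them when `n = k³`.

Lower bound. Take the word that carries one copy of the pattern and zeros elsewhere. Flipping any
of the zeros `2, …, k - 1` of its first block leaves no two ones at distance `k - 1` with only
zeros in between, which every occurrence needs (at its offsets `1` and `k`).
-/

open Finset

theorem Finset.card_le_two_mul_of_forall_not_gap {L : Finset ℕ} {N D : ℕ}
    (hL : ∀ ℓ ∈ L, ℓ < N) (hgap : ∀ a ∈ L, ∀ b ∈ L, ¬ (a + 2 ≤ b ∧ b ≤ a + D)) :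
    L.card ≤ 2 * (N / (D + 1) + 1) := by
  classical
  have hfiber : ∀ q ∈ L.image (· / (D + 1)), (L.filter fun a => a / (D + 1) = q).card ≤ 2 := by
    intro q _
    have window : ∀ a, a / (D + 1) = q → (D + 1) * q ≤ a ∧ a < (D + 1) * q + (D + 1) := by
      rintro a rfl
      exact ⟨Nat.mul_div_le a (D + 1), Nat.lt_mul_div_succ a (Nat.succ_pos D)⟩
    by_contra! h3
    obtain ⟨a, ha, b, hb, c, hc, hab, hac, hbc⟩ := two_lt_card.mp h3
    simp only [mem_filter] at ha hb hc
    have := window a ha.2; have := window b hb.2; have := window c hc.2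
    have := hgap a ha.1 b hb.1; have := hgap b hb.1 a ha.1; have := hgap a ha.1 c hc.1
    have := hgap c hc.1 a ha.1; have := hgap b hb.1 c hc.1; have := hgap c hc.1 b hb.1
    omega
  have himage : (L.image (· / (D + 1))).card ≤ N / (D + 1) + 1 := by
    calc _ ≤ (range (N / (D + 1) + 1)).card := by
          refine card_le_card fun q hq => ?_
          obtain ⟨a, ha, rfl⟩ := mem_image.mp hq
          exact mem_range.mpr (Nat.lt_succ_of_le (Nat.div_le_div_right (hL a ha).le))
      _ = _ := card_range _
  calc L.card ≤ 2 * (L.image (· / (D + 1))).card := card_le_mul_card_image L 2 hfiber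
    _ ≤ _ := Nat.mul_le_mul_left 2 himage

theorem Nat.le_card_filter_range_add_mod_lt {m k r : ℕ} (s : ℕ) (hm : m ≤ k) (hr : r ≤ k) :
    m + r ≤ k + ((range m).filter fun t => (s + t) % k < r).card := by
  classical
  have hinj : Set.InjOn (fun t => (s + t) % k) (range m) := fun t ht t' ht' h =>
    (Nat.ModEq.add_left_cancel' s h).eq_of_lt_of_lt
      (by simp only [coe_range, Set.mem_Iio] at ht; omega)
      (by simp only [coe_range, Set.mem_Iio] at ht'; omega)
  have hunion : ((range m).image (fun t => (s + t) % k) ∪ range r).card ≤ k := by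
    refine (card_le_card fun y hy => ?_).trans (card_range k).le
    rcases mem_union.mp hy with hy | hy
    · obtain ⟨t, ht, rfl⟩ := mem_image.mp hy
      exact mem_range.mpr (Nat.mod_lt _ (by simp only [mem_range] at ht; omega))
    · exact mem_range.mpr ((mem_range.mp hy).trans_le hr)
  have hinter : ((range m).image (fun t => (s + t) % k) ∩ range r).card ≤
      ((range m).filter fun t => (s + t) % k < r).card := by
    refine (card_le_card fun y hy => ?_).trans
      (Finset.card_image_le (f := fun t => (s + t) % k))
    obtain ⟨hy, hyr⟩ := mem_inter.mp hy
    obtain ⟨t, ht, rfl⟩ := mem_image.mp hy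
    exact mem_image.mpr ⟨t, mem_filter.mpr ⟨ht, mem_range.mp hyr⟩, rfl⟩
  have := card_union_add_card_inter ((range m).image fun t => (s + t) % k) (range r)
  rw [Finset.card_image_of_injOn hinj, card_range, card_range] at this
  omega

section FlipBit

variable {n : ℕ} {x : Fin n → Bool} {i j : Fin n}

theorem flipBit_apply_of_ne (h : j ≠ i) : flipBit x i j = x j := if_neg h

theorem flipBit_apply_self : flipBit x i i = !x i := if_pos rfl

theorem eq_of_flipBit_apply_ne (h : flipBit x i j ≠ x j) : j = i :=
  by_contra fun hj => h (flipBit_apply_of_ne hj)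

end FlipBit

namespace CyclicPattern

section General

variable {n : ℕ} [NeZero n] {S : Finset ℕ} {v : ℕ → Bool} {x : Fin n → Bool} {ℓ : ℕ}

/-- A pattern is a partial word: `v a` is prescribed exactly at the offsets `a ∈ S`. -/
def Occurs (S : Finset ℕ) (v : ℕ → Bool) (x : Fin n → Bool) (ℓ : ℕ) : Prop :=
  ∀ a ∈ S, x (Fin.ofNat n (ℓ + a)) = v a

open Classical in
noncomputable def occFn (n : ℕ) [NeZero n] (S : Finset ℕ) (v : ℕ → Bool) (x : Fin n → Bool) :
    Bool :=
  decide (∃ ℓ, Occurs S v x ℓ)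

theorem occFn_eq_true_iff : occFn n S v x = true ↔ ∃ ℓ, Occurs S v x ℓ := by
  simp [occFn]

theorem ofNat_mod_add (ℓ a : ℕ) : Fin.ofNat n (ℓ % n + a) = Fin.ofNat n (ℓ + a) :=
  Fin.ext (by simp [Nat.mod_add_mod])

theorem ofNat_add_injOn (ℓ : ℕ) :
    Set.InjOn (fun a : ℕ => Fin.ofNat n (ℓ + a)) (Set.Iio n) := fun _ ha _ hb hab =>
  (Nat.ModEq.add_left_cancel' ℓ (Fin.val_eq_of_eq hab)).eq_of_lt_of_lt ha hb

theorem occurs_mod_iff : Occurs S v x (ℓ % n) ↔ Occurs S v x ℓ := by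
  simp only [Occurs, ofNat_mod_add]

theorem Occurs.flipBit {i : Fin n} (h : Occurs S v x ℓ)
    (hi : ∀ a ∈ S, Fin.ofNat n (ℓ + a) ≠ i) : Occurs S v (flipBit x i) ℓ := fun a ha => by
  rw [flipBit_apply_of_ne (hi a ha), h a ha]

/-- Each flip must repair the same mismatch of `x` at `ℓ`. -/
theorem eq_of_occurs_flipBit {i j : Fin n} (hx : ¬ Occurs S v x ℓ)
    (hi : Occurs S v (flipBit x i) ℓ) (hj : Occurs S v (flipBit x j) ℓ) : i = j := by
  obtain ⟨a, ha, hxa⟩ : ∃ a ∈ S, x (Fin.ofNat n (ℓ + a)) ≠ v a := by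
    simpa [Occurs] using hx
  rw [← eq_of_flipBit_apply_ne (x := x) (i := i) (by rw [hi a ha]; exact hxa.symm),
    ← eq_of_flipBit_apply_ne (x := x) (i := j) (by rw [hj a ha]; exact hxa.symm)]

def patternWord (n : ℕ) (S : Finset ℕ) (v : ℕ → Bool) : Fin n → Bool :=
  fun j => decide (j.val ∈ S) && v j

theorem occurs_patternWord (hS : ∀ a ∈ S, a < n) : Occurs S v (patternWord n S v) 0 := by
  intro a ha
  simp only [patternWord, Fin.val_ofNat, zero_add, Nat.mod_eq_of_lt (hS a ha), ha,
    decide_true, Bool.true_and]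

theorem sensAt_occFn_le_card (hx : occFn n S v x = true) :
    sensAt (occFn n S v) x ≤ S.card := by
  classical
  obtain ⟨ℓ, hℓ⟩ := occFn_eq_true_iff.mp hx
  calc sensAt (occFn n S v) x ≤ (S.image fun a => Fin.ofNat n (ℓ + a)).card := by
        refine card_le_card fun i hi => ?_
        simp only [mem_filter, mem_univ, true_and, hx, ne_eq] at hi
        by_contra hiS
        refine hi (occFn_eq_true_iff.mpr ⟨ℓ, hℓ.flipBit fun a ha hai => hiS ?_⟩)
        exact mem_image.mpr ⟨a, ha, hai⟩
    _ ≤ S.card := card_image_le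

noncomputable def flipStarts (S : Finset ℕ) (v : ℕ → Bool) (x : Fin n → Bool) : Finset ℕ := by
  classical exact (range n).filter fun ℓ => ∃ i, Occurs S v (flipBit x i) ℓ

theorem sensAt_occFn_le_card_flipStarts (hx : occFn n S v x = false) :
    sensAt (occFn n S v) x ≤ (flipStarts S v x).card := by
  classical
  refine card_le_card_of_forall_subsingleton (fun i ℓ => Occurs S v (flipBit x i) ℓ) ?_ ?_
  · intro i hi
    simp only [mem_filter, mem_univ, true_and, hx, ne_eq, Bool.not_eq_false] at hi
    obtain ⟨ℓ, hℓ⟩ := occFn_eq_true_iff.mp hi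
    refine ⟨ℓ % n, ?_, occurs_mod_iff.mpr hℓ⟩
    simpa [flipStarts] using ⟨Nat.mod_lt _ (NeZero.pos n), i, occurs_mod_iff.mpr hℓ⟩
  · intro ℓ _ i hi j hj
    have hx' : ¬ Occurs S v x ℓ := fun h => by
      simp [occFn_eq_true_iff.mpr ⟨ℓ, h⟩] at hx
    exact eq_of_occurs_flipBit hx' hi.2 hj.2

noncomputable def conflicts (S : Finset ℕ) (v : ℕ → Bool) (δ : ℕ) : Finset ℕ := by
  classical exact S.filter fun b => b + δ ∈ S ∧ v b ≠ v (b + δ)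

theorem mem_conflicts {δ b : ℕ} :
    b ∈ conflicts S v δ ↔ b ∈ S ∧ b + δ ∈ S ∧ v b ≠ v (b + δ) := by
  simp [conflicts]

/-- Off the two flipped bits both occurrences read `x`, so every conflict of the shift `δ` sits on
one of those two bits; but the conflicts occupy more than two positions. -/
theorem not_occurs_flipBit_add {e e' : Fin n} {δ : ℕ} (hS : ∀ a ∈ S, a < n)
    (hδ : 2 < (conflicts S v δ).card) (h : Occurs S v (flipBit x e) ℓ) :
    ¬ Occurs S v (flipBit x e') (ℓ + δ) := by
  classical
  intro h'
  have hmaps : Set.MapsTo (fun b : ℕ => Fin.ofNat n (ℓ + δ + b)) (conflicts S v δ)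
      (({e, e'} : Finset (Fin n)) : Set (Fin n)) := by
    intro b hb
    obtain ⟨hbS, hbδ, hne⟩ := mem_conflicts.mp hb
    by_contra hee'
    simp only [coe_insert, coe_singleton, Set.mem_insert_iff, Set.mem_singleton_iff,
      not_or] at hee'
    have h1 := h (b + δ) hbδ
    have h2 := h' b hbS
    rw [show ℓ + (b + δ) = ℓ + δ + b by ring, flipBit_apply_of_ne hee'.1] at h1
    rw [flipBit_apply_of_ne hee'.2] at h2
    exact hne (h2.symm.trans h1)
  have hinj : Set.InjOn (fun b : ℕ => Fin.ofNat n (ℓ + δ + b)) (conflicts S v δ) :=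
    (ofNat_add_injOn (ℓ + δ)).mono fun b hb => hS b (filter_subset _ _ hb)
  have := card_le_card_of_injOn _ hmaps hinj
  have : ({e, e'} : Finset (Fin n)).card ≤ 2 := card_le_two
  omega

theorem sensAt_occFn_le_of_conflicts {D : ℕ} (hS : ∀ a ∈ S, a < n)
    (hconf : ∀ δ, 2 ≤ δ → δ ≤ D → 2 < (conflicts S v δ).card) (hx : occFn n S v x = false) :
    sensAt (occFn n S v) x ≤ 2 * (n / (D + 1) + 1) := by
  refine (sensAt_occFn_le_card_flipStarts hx).trans (card_le_two_mul_of_forall_not_gap ?_ ?_)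
  · intro ℓ hℓ
    simp only [flipStarts, mem_filter, mem_range] at hℓ
    exact hℓ.1
  · rintro a ha b hb ⟨hab, hbD⟩
    simp only [flipStarts, mem_filter] at ha hb
    obtain ⟨e, he⟩ := ha.2
    obtain ⟨e', he'⟩ := hb.2
    refine not_occurs_flipBit_add (e' := e') hS (hconf (b - a) (by omega) (by omega)) he ?_
    rwa [Nat.add_sub_cancel' (by omega)]

theorem sens_occFn_le {D : ℕ} (hS : ∀ a ∈ S, a < n)
    (hconf : ∀ δ, 2 ≤ δ → δ ≤ D → 2 < (conflicts S v δ).card) :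
    sens (occFn n S v) ≤ max S.card (2 * (n / (D + 1) + 1)) := by
  refine Finset.sup_le fun x _ => ?_
  cases hx : occFn n S v x
  · exact le_max_of_le_right (sensAt_occFn_le_of_conflicts hS hconf hx)
  · exact le_max_of_le_left (sensAt_occFn_le_card hx)

end General

variable {k n : ℕ}

def patSupport (k : ℕ) : Finset ℕ :=
  (range (k ^ 2)).filter fun a => a < k ∨ a % k < 5 ∨ k ^ 2 - 3 ≤ a

def patVal (k a : ℕ) : Bool := decide (a < 2 ∨ k ≤ a)

theorem mem_patSupport {a : ℕ} :
    a ∈ patSupport k ↔ a < k ^ 2 ∧ (a < k ∨ a % k < 5 ∨ k ^ 2 - 3 ≤ a) := by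
  simp [patSupport]

theorem gPat_iff (hk : 5 ≤ k) (z : ℕ → Bool) :
    GPat k z ↔ ∀ a ∈ patSupport k, z a = patVal k a := by
  have hkk : k ^ 2 = k * k := sq k
  have h5k : 5 * k ≤ k * k := Nat.mul_le_mul_right k hk
  have hlast : (k - 1) * k = k * k - k := Nat.sub_one_mul k k
  constructor
  · rintro ⟨hfirst, hblocks, hend⟩ a ha
    obtain ⟨hak2, ha⟩ := mem_patSupport.mp ha
    rcases lt_or_ge a k with hak | hka
    · rw [hfirst a hak, patVal, decide_eq_decide]
      omega
    rw [patVal, decide_eq_true (Or.inr hka)]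
    rcases ha with hak | hmod | hge
    · omega
    · have := hblocks (a / k) ((Nat.one_le_div_iff (by omega)).mpr hka)
        (Nat.div_lt_of_lt_mul (by omega)) (a % k) hmod
      rwa [Nat.div_add_mod'] at this
    · have := hend (a - (k - 1) * k) (by omega) (by omega)
      rwa [Nat.add_sub_cancel' (by omega)] at this
  · intro h
    refine ⟨fun t ht => ?_, fun j hj hjk t ht => ?_, fun t ht hkt => ?_⟩
    · rw [h t (mem_patSupport.mpr ⟨by omega, Or.inl ht⟩), patVal, decide_eq_decide]
      omega
    · have hjk' : j * k + k ≤ k * k := by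
        rw [← Nat.succ_mul]; exact Nat.mul_le_mul_right k hjk
      have hkj : k ≤ j * k := Nat.le_mul_of_pos_left k hj
      rw [h _ (mem_patSupport.mpr ⟨by omega, Or.inr (Or.inl ?_)⟩)]
      · exact decide_eq_true (Or.inr (by omega))
      · rwa [Nat.mul_add_mod_of_lt (by omega)]
    · rw [h _ (mem_patSupport.mpr ⟨by omega, Or.inr (Or.inr (by omega))⟩)]
      exact decide_eq_true (Or.inr (by omega))

theorem cycPatFn_eq_occFn [NeZero n] (hn : 0 < n) (hk : 5 ≤ k) :
    cycPatFn k n hn = occFn n (patSupport k) (patVal k) := by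
  funext x
  classical
  exact Bool.decide_congr (exists_congr fun ℓ => gPat_iff hk _)

theorem card_patSupport_le : (patSupport k).card ≤ 6 * k + 3 := by
  classical
  have hsub : patSupport k ⊆ range k ∪ (range k ×ˢ range 5).image (fun p => p.1 * k + p.2) ∪
      Ico (k ^ 2 - 3) (k ^ 2) := by
    intro a ha
    obtain ⟨hak2, hak | hmod | hge⟩ := mem_patSupport.mp ha
    · simp [hak]
    · refine mem_union_left _ (mem_union_right _ (mem_image.mpr ⟨(a / k, a % k), ?_,
        Nat.div_add_mod' a k⟩))
      exact mem_product.mpr ⟨mem_range.mpr (Nat.div_lt_of_lt_mul (by rwa [← sq])),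
        mem_range.mpr hmod⟩
    · exact mem_union_right _ (mem_Ico.mpr ⟨hge, hak2⟩)
  calc (patSupport k).card
      ≤ (range k).card + ((range k ×ˢ range 5).image (fun p => p.1 * k + p.2)).card +
          (Ico (k ^ 2 - 3) (k ^ 2)).card :=
        (card_le_card hsub).trans
          ((card_union_le _ _).trans (by gcongr; exact card_union_le _ _))
    _ ≤ k + k * 5 + 3 := by
        gcongr
        · simp
        · exact card_image_le.trans (by simp)
        · simp only [Nat.card_Ico]; omega
    _ = 6 * k + 3 := by ring

theorem two_lt_card_conflicts_patSupport (hk : 8 ≤ k) {δ : ℕ} (hδ : 2 ≤ δ) (hδk : δ + 5 ≤ k ^ 2) :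
    2 < (conflicts (patSupport k) (patVal k) δ).card := by
  have hkk : k ^ 2 = k * k := sq k
  have h8k : 8 * k ≤ k * k := Nat.mul_le_mul_right k hk
  have hzero : ∀ b, 2 ≤ b → b < k → b ∈ patSupport k ∧ patVal k b = false := fun b h2 hb =>
    ⟨mem_patSupport.mpr ⟨by omega, Or.inl hb⟩, decide_eq_false (by omega)⟩
  have hone : ∀ a, a < k ^ 2 → (a < 2 ∨ k ≤ a ∧ (a % k < 5 ∨ k ^ 2 - 3 ≤ a)) →
      a ∈ patSupport k ∧ patVal k a = true := fun a ha h =>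
    ⟨mem_patSupport.mpr ⟨ha, by omega⟩, decide_eq_true (by omega)⟩
  have hconf : ∀ b, b ∈ patSupport k ∧ patVal k b = false →
      b + δ ∈ patSupport k ∧ patVal k (b + δ) = true →
      b ∈ conflicts (patSupport k) (patVal k) δ := fun b hb hbδ =>
    mem_conflicts.mpr ⟨hb.1, hbδ.1, by rw [hb.2, hbδ.2]; decide⟩
  have hconf' : ∀ b, b ∈ patSupport k ∧ patVal k b = true →
      b + δ ∈ patSupport k ∧ patVal k (b + δ) = false →
      b ∈ conflicts (patSupport k) (patVal k) δ := fun b hb hbδ =>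
    mem_conflicts.mpr ⟨hb.1, hbδ.1, by rw [hb.2, hbδ.2]; decide⟩
  rcases (show δ ≤ 4 ∨ k ^ 2 < δ + k ∨ 5 ≤ δ ∧ δ + k ≤ k ^ 2 by omega)
    with hsmall | hlarge | ⟨h5, hmid⟩
  · -- the pairs `(0, δ)`, `(1, δ + 1)` and `(k - δ, k)`
    refine two_lt_card.mpr ⟨0, ?_, 1, ?_, k - δ, ?_, by omega, by omega, by omega⟩
    · exact hconf' _ (hone _ (by omega) (by omega)) (hzero _ (by omega) (by omega))
    · exact hconf' _ (hone _ (by omega) (by omega)) (hzero _ (by omega) (by omega))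
    · refine hconf _ (hzero _ (by omega) (by omega))
        (hone _ (by omega) (Or.inr ⟨by omega, ?_⟩))
      rw [Nat.sub_add_cancel (by omega), Nat.mod_self]; omega
  · exact two_lt_card.mpr ⟨k ^ 2 - 3 - δ, hconf _ (hzero _ (by omega) (by omega))
      (hone _ (by omega) (by omega)), k ^ 2 - 2 - δ, hconf _ (hzero _ (by omega) (by omega))
      (hone _ (by omega) (by omega)), k ^ 2 - 1 - δ, hconf _ (hzero _ (by omega) (by omega))
      (hone _ (by omega) (by omega)), by omega, by omega, by omega⟩
  · -- `b ∈ [2, k)` is a conflict as soon as `b + δ` lies in the head of a block, and the `k - 2`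
    -- consecutive values of `b + δ` miss only two residues mod `k`
    have hres := Nat.le_card_filter_range_add_mod_lt (δ + 2) (m := k - 2) (k := k) (r := 5)
      (by omega) (by omega)
    calc 2 < ((range (k - 2)).filter fun t => (δ + 2 + t) % k < 5).card := by omega
      _ ≤ _ := card_le_card_of_injOn (2 + ·) (fun t ht => ?_) (add_right_injective 2).injOn
    obtain ⟨ht, hmod⟩ := mem_filter.mp (mem_coe.mp ht)
    rw [mem_range] at ht
    beta_reduce
    rw [show δ + 2 + t = 2 + t + δ by ring] at hmod
    have hkb : k ≤ 2 + t + δ := by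
      by_contra! hlt
      rw [Nat.mod_eq_of_lt hlt] at hmod
      omega
    exact hconf _ (hzero _ (by omega) (by omega))
      (hone _ (by omega) (Or.inr ⟨hkb, Or.inl hmod⟩))

theorem sens_cycPatFn_le (hk : 8 ≤ k) (hn : 0 < n) (hkn : k ^ 2 ≤ n) :
    sens (cycPatFn k n hn) ≤ max (6 * k + 3) (2 * (n / (k ^ 2 - 4) + 1)) := by
  have : NeZero n := ⟨hn.ne'⟩
  have hk2 : 64 ≤ k ^ 2 := by nlinarith
  rw [cycPatFn_eq_occFn hn (by omega), show k ^ 2 - 4 = k ^ 2 - 5 + 1 by omega]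
  refine (sens_occFn_le (fun a ha => ?_) fun δ hδ hδk => ?_).trans
    (max_le_max card_patSupport_le le_rfl)
  · exact (mem_patSupport.mp ha).1.trans_le hkn
  · exact two_lt_card_conflicts_patSupport hk hδ (by omega)

def patOnes (k : ℕ) : Finset ℕ := (patSupport k).filter fun a => patVal k a = true

theorem mem_patOnes {a : ℕ} :
    a ∈ patOnes k ↔ a < k ^ 2 ∧ (a < 2 ∨ k ≤ a ∧ (a % k < 5 ∨ k ^ 2 - 3 ≤ a)) := by
  simp only [patOnes, mem_filter, mem_patSupport, patVal, decide_eq_true_eq]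
  have := Nat.mod_le a k
  omega

theorem exists_mem_insert_patOnes_between (hk : 8 ≤ k) {p u : ℕ} (hp : 2 ≤ p) (hpk : p < k)
    (hu : u ∈ insert p (patOnes k)) (hu' : u + (k - 1) ∈ insert p (patOnes k)) :
    ∃ d, 1 ≤ d ∧ d ≤ k - 2 ∧ u + d ∈ insert p (patOnes k) := by
  have hkk : k ^ 2 = k * k := sq k
  have h8k : 8 * k ≤ k * k := Nat.mul_le_mul_right k hk
  simp only [mem_insert, mem_patOnes] at hu hu' ⊢
  rcases hu with rfl | ⟨hu2, hu | ⟨hku, hmod | hend⟩⟩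
  · refine ⟨k - u, by omega, by omega, Or.inr ⟨by omega, Or.inr ⟨by omega, Or.inl ?_⟩⟩⟩
    rw [Nat.add_sub_cancel' hpk.le, Nat.mod_self]; omega
  · obtain rfl | rfl : u = 0 ∨ u = 1 := by omega
    · exact ⟨1, le_rfl, by omega, Or.inr ⟨by omega, Or.inl (by omega)⟩⟩
    · exact ⟨p - 1, by omega, by omega, Or.inl (by omega)⟩
  · obtain ⟨q, r, hr5, rfl⟩ : ∃ q r, r < 5 ∧ u = q * k + r :=
      ⟨u / k, u % k, hmod, (Nat.div_add_mod' u k).symm⟩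
    have hlast : (k - 1) * k = k * k - k := Nat.sub_one_mul k k
    have hqk : q < k := Nat.lt_of_mul_lt_mul_right (a := k) (by omega)
    have hq : q * k ≤ (k - 1) * k := Nat.mul_le_mul_right k (by omega)
    obtain hr | rfl : r < 4 ∨ r = 4 := by omega
    · refine ⟨1, le_rfl, by omega, Or.inr ⟨by omega, Or.inr ⟨by omega, Or.inl ?_⟩⟩⟩
      rw [add_assoc, Nat.mul_add_mod_of_lt (by omega)]; omega
    obtain hq1 | rfl : q + 1 < k ∨ q = k - 1 := by omega
    · have hq1k : (q + 1) * k ≤ (k - 1) * k := Nat.mul_le_mul_right k (by omega)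
      have hblock : q * k + 4 + (k - 4) = (q + 1) * k := by rw [Nat.succ_mul]; omega
      refine ⟨k - 4, by omega, by omega, Or.inr ⟨by omega, Or.inr ⟨by omega, Or.inl ?_⟩⟩⟩
      rw [hblock, Nat.mul_mod_left]; omega
    · exact ⟨k - 7, by omega, by omega,
        Or.inr ⟨by omega, Or.inr ⟨by omega, Or.inr (by omega)⟩⟩⟩
  · exact ⟨1, le_rfl, by omega, Or.inr ⟨by omega, Or.inr ⟨by omega, Or.inr (by omega)⟩⟩⟩

theorem flipBit_patternWord_eq_true_iff [NeZero n] (hkn : k ≤ n) {p : ℕ} (hp : 2 ≤ p)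
    (hpk : p < k) (j : Fin n) :
    flipBit (patternWord n (patSupport k) (patVal k)) (Fin.ofNat n p) j = true ↔
      j.val ∈ insert p (patOnes k) := by
  have hpn : (Fin.ofNat n p).val = p := Nat.mod_eq_of_lt (by omega)
  by_cases hj : j = Fin.ofNat n p
  · subst hj
    have hpv : patVal k p = false := decide_eq_false (by omega)
    simp only [flipBit_apply_self, patternWord, hpn, hpv, Bool.and_false, Bool.not_false,
      mem_insert_self]
  · have hjp : j.val ≠ p := fun h => hj (Fin.ext (h.trans hpn.symm))
    simp only [flipBit_apply_of_ne hj, patternWord, patOnes, mem_insert, hjp, false_or,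
      mem_filter, Bool.and_eq_true, decide_eq_true_eq]

theorem occFn_flipBit_patternWord [NeZero n] (hk : 8 ≤ k) (hkn : k ^ 2 + k ≤ n) {p : ℕ}
    (hp : 2 ≤ p) (hpk : p < k) :
    occFn n (patSupport k) (patVal k)
      (flipBit (patternWord n (patSupport k) (patVal k)) (Fin.ofNat n p)) = false := by
  have h8k : 8 * k ≤ k ^ 2 := by nlinarith
  rw [Bool.eq_false_iff, ne_eq, occFn_eq_true_iff]
  rintro ⟨m, hm⟩
  -- an occurrence at `m` reads `1 1 0 ⋯ 0 1` on the offsets `0, …, k`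
  have hread : ∀ t ≤ k, ((m + t) % n ∈ insert p (patOnes k) ↔ t < 2 ∨ t = k) := by
    intro t ht
    have hmem : t ∈ patSupport k := by
      refine mem_patSupport.mpr ⟨by omega, ?_⟩
      rcases ht.lt_or_eq with ht | rfl
      · exact Or.inl ht
      · exact Or.inr (Or.inl (by rw [Nat.mod_self]; omega))
    rw [← Fin.val_ofNat n (m + t), ← flipBit_patternWord_eq_true_iff (by omega) hp hpk,
      hm t hmem, patVal, decide_eq_true_eq]
    omega
  set u := (m + 1) % n
  have hu : u ∈ insert p (patOnes k) := (hread 1 (by omega)).mpr (Or.inl (by omega))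
  have hun : u < k ^ 2 := by
    rcases mem_insert.mp hu with h | h
    · omega
    · exact (mem_patOnes.mp h).1
  have hshift : ∀ d ≤ k - 1, (m + (1 + d)) % n = u + d := fun d hd => by
    rw [← add_assoc, ← Nat.mod_add_mod, Nat.mod_eq_of_lt (by omega)]
  obtain ⟨d, hd1, hdk, hd⟩ := exists_mem_insert_patOnes_between hk hp hpk hu (by
    rw [← hshift _ le_rfl]
    exact (hread _ (by omega)).mpr (Or.inr (by omega)))
  have := (hread (1 + d) (by omega)).mp (by rwa [hshift d (by omega)])
  omega

theorem sub_two_le_sens_cycPatFn (hk : 8 ≤ k) (hn : 0 < n) (hkn : k ^ 2 + k ≤ n) :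
    k - 2 ≤ sens (cycPatFn k n hn) := by
  have : NeZero n := ⟨hn.ne'⟩
  rw [cycPatFn_eq_occFn hn (by omega)]
  set x := patternWord n (patSupport k) (patVal k)
  have hx : occFn n (patSupport k) (patVal k) x = true :=
    occFn_eq_true_iff.mpr ⟨0, occurs_patternWord fun a ha => by
      have := (mem_patSupport.mp ha).1; omega⟩
  calc k - 2 = (Ico 2 k).card := (Nat.card_Ico 2 k).symm
    _ ≤ sensAt (occFn n (patSupport k) (patVal k)) x := by
        refine card_le_card_of_injOn (Fin.ofNat n) (fun p hp => ?_) (fun a ha b hb hab => ?_)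
        · obtain ⟨hp2, hpk⟩ := mem_Ico.mp (mem_coe.mp hp)
          simp only [coe_filter, mem_univ, true_and, Set.mem_ofPred_eq, hx]
          exact ne_of_eq_of_ne (occFn_flipBit_patternWord hk hkn hp2 hpk) Bool.false_ne_true
        · simp only [coe_Ico, Set.mem_Ico] at ha hb
          have := congrArg Fin.val hab
          rwa [Fin.val_ofNat, Fin.val_ofNat, Nat.mod_eq_of_lt (by omega),
            Nat.mod_eq_of_lt (by omega)] at this
    _ ≤ sens _ := le_sup (mem_univ _)

theorem cube_div_sq_sub_four_le (hk : 5 ≤ k) : k ^ 3 / (k ^ 2 - 4) ≤ k := by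
  have h5k : 5 * k ≤ k ^ 2 := by nlinarith
  obtain ⟨K, hK⟩ : ∃ K, k ^ 2 = K + 4 := ⟨k ^ 2 - 4, by omega⟩
  rw [hK, Nat.add_sub_cancel, show k ^ 3 = k * (K + 4) by rw [← hK]; ring]
  refine Nat.lt_succ_iff.mp ((Nat.div_lt_iff_lt_mul (by omega)).mpr ?_)
  nlinarith

end CyclicPattern

open CyclicPattern

/-- With `n = k³`, the cyclically invariant pattern function has sensitivity
`Θ(n^{1/3})`. -/
theorem cycPatFn_sens_theta_cbrt :
    ∃ c₁ : ℝ, 0 < c₁ ∧ ∃ c₂ : ℝ, 0 < c₂ ∧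
      ∀ (k : ℕ) (h8 : 8 ≤ k) (hpos : 0 < k ^ 3),
        c₁ * ((k ^ 3 : ℕ) : ℝ) ^ ((1 : ℝ) / 3) ≤
            (sens (cycPatFn k (k ^ 3) hpos) : ℝ) ∧
          (sens (cycPatFn k (k ^ 3) hpos) : ℝ) ≤
            c₂ * ((k ^ 3 : ℕ) : ℝ) ^ ((1 : ℝ) / 3) := by
  refine ⟨1 / 2, by norm_num, 7, by norm_num, fun k h8 hpos => ?_⟩
  have hcbrt : ((k ^ 3 : ℕ) : ℝ) ^ ((1 : ℝ) / 3) = k := by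
    rw [Nat.cast_pow, ← Real.rpow_natCast, ← Real.rpow_mul (Nat.cast_nonneg k)]
    norm_num
  have hk2 : k ^ 2 + k ≤ k ^ 3 := by nlinarith
  have hlow : k ≤ 2 * sens (cycPatFn k (k ^ 3) hpos) := by
    have := sub_two_le_sens_cycPatFn h8 hpos hk2
    omega
  have hup : sens (cycPatFn k (k ^ 3) hpos) ≤ 7 * k := by
    have := sens_cycPatFn_le h8 hpos (by omega)
    have := cube_div_sq_sub_four_le (by omega : 5 ≤ k)
    omega
  rw [hcbrt]
  constructor
  · have : (k : ℝ) ≤ 2 * sens (cycPatFn k (k ^ 3) hpos) := by exact_mod_cast hlow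
    linarith
  · exact_mod_cast hup
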